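/- PNS click probability: if Alice emits N ~ Poisson(λ) photons, Eve removes min(N, k) photons, and Bob's detector has efficiency p_c and dark count probability p_d, then the click probability is 1 - (1-p_d)(1-p_c)^{-k} e^{-p_c λ} · γ̄(k, (1-p_c)λ) - (1-p_d)·Γ̄(k, λ), where Γ̄(s,x) = Γ(s,x)/Γ(s) is the regularized upper incomplete gamma function and γ̄ = 1 - Γ̄. -/

import Mathlib

open MeasureTheory

/-- Upper incomplete gamma function `Γ(s,x) = ∫_x^∞ t^{s-1} e^{-t} dt`. -/
noncomputable def upperGamma (s x : ℝ) : ℝ :=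
  ∫ t in Set.Ioi x, t ^ (s - 1) * Real.exp (-t)

/-- Regularized upper incomplete gamma function `Γ̄(s,x) = Γ(s,x)/Γ(s)`. -/
noncomputable def regUpperGamma (s x : ℝ) : ℝ := upperGamma s x / Real.Gamma s

/-!
For integer `k`, `-(k-1)! e^{-t} ∑_{n<k} t^n/n!` is an antiderivative of `t^{k-1} e^{-t}`, so
`Γ̄(k, x) = e^{-x} ∑_{n<k} x^n/n!` and `e^λ Γ̄(k, λ)` is the truncated exponential series.
Splitting `∑ₙ (1-p_c)^{n-k} λ^n/n!` at `n = k`, the head is that truncated series and the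
tail is `(1-p_c)^{-k}` times the tail of the series of `e^{(1-p_c)λ}`; weighting by `e^{-λ}`
gives the formula.
-/

open Real Filter Topology Finset Nat

noncomputable def truncExp (m : ℕ) (x : ℝ) : ℝ := ∑ n ∈ range m, x ^ n / n !

theorem truncExp_succ (m : ℕ) (x : ℝ) : truncExp (m + 1) x = truncExp m x + x ^ m / m ! :=
  sum_range_succ _ _

theorem hasSum_pow_div_factorial (x : ℝ) : HasSum (fun n => x ^ n / n !) (exp x) :=
  exp_eq_exp_ℝ ▸ NormedSpace.expSeries_div_hasSum_exp x

theorem tsum_pow_add_div_factorial (k : ℕ) (x : ℝ) :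
    ∑' n, x ^ (n + k) / (n + k)! = exp x - truncExp k x := by
  rw [← (hasSum_pow_div_factorial x).tsum_eq,
    ← (summable_pow_div_factorial x).sum_add_tsum_nat_add k, truncExp, add_sub_cancel_left]

theorem hasDerivAt_truncExp_succ (m : ℕ) (t : ℝ) :
    HasDerivAt (truncExp (m + 1)) (truncExp m t) t := by
  induction m with
  | zero =>
    have h1 : truncExp 1 = fun _ => 1 := funext fun x => by simp [truncExp]
    simpa [h1, truncExp] using hasDerivAt_const t (1 : ℝ)
  | succ m ih =>
    have hpow := (hasDerivAt_pow (m + 1) t).div_const ((m + 1)! : ℝ)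
    refine ((ih.add hpow).congr_deriv ?_).congr_of_eventuallyEq
      (Eventually.of_forall fun x => truncExp_succ (m + 1) x)
    rw [truncExp_succ, factorial_succ]
    push_cast
    field_simp

theorem hasDerivAt_neg_exp_neg_mul_truncExp_succ (m : ℕ) (t : ℝ) :
    HasDerivAt (fun t => -(exp (-t) * truncExp (m + 1) t)) (t ^ m * exp (-t) / m !) t := by
  have hexp : HasDerivAt (fun t => exp (-t)) (-exp (-t)) t := by
    simpa using (hasDerivAt_neg t).exp
  refine ((hexp.mul (hasDerivAt_truncExp_succ m t)).neg).congr_deriv ?_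
  rw [truncExp_succ]
  ring

theorem tendsto_exp_neg_mul_truncExp (m : ℕ) :
    Tendsto (fun t => exp (-t) * truncExp m t) atTop (𝓝 0) := by
  have hterm (n : ℕ) : Tendsto (fun t : ℝ => t ^ n * exp (-t) / n !) atTop (𝓝 0) := by
    simpa using (tendsto_pow_mul_exp_neg_atTop_nhds_zero n).div_const (n ! : ℝ)
  simpa [truncExp, mul_sum, div_mul_eq_mul_div, mul_comm] using
    tendsto_finsetSum (range m) fun n _ => hterm n

theorem integrableOn_Ioi_pow_mul_exp_neg (m : ℕ) (x : ℝ) :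
    IntegrableOn (fun t => t ^ m * exp (-t)) (Set.Ioi x) := by
  have hpos : IntegrableOn (fun t => t ^ m * exp (-t)) (Set.Ioi 0) := by
    refine (GammaIntegral_convergent (s := (m : ℝ) + 1) (by positivity)).congr_fun
      (fun t _ => ?_) measurableSet_Ioi
    simp [rpow_natCast, mul_comm]
  rcases le_or_gt 0 x with hx | hx
  · exact hpos.mono_set (Set.Ioi_subset_Ioi hx)
  · rw [← Set.Ioc_union_Ioi_eq_Ioi hx.le]
    exact ((by fun_prop : Continuous fun t : ℝ => t ^ m * exp (-t)).integrableOn_Icc.mono_set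
      Set.Ioc_subset_Icc_self).union hpos

theorem integral_Ioi_pow_mul_exp_neg (m : ℕ) (x : ℝ) :
    ∫ t in Set.Ioi x, t ^ m * exp (-t) = m ! * (exp (-x) * truncExp (m + 1) x) := by
  have h := integral_Ioi_of_hasDerivAt_of_tendsto'
    (fun t _ => hasDerivAt_neg_exp_neg_mul_truncExp_succ m t)
    ((integrableOn_Ioi_pow_mul_exp_neg m x).div_const _)
    (by simpa using (tendsto_exp_neg_mul_truncExp (m + 1)).neg)
  rw [integral_div, sub_neg_eq_add, zero_add, div_eq_iff (by positivity)] at h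
  rw [h, mul_comm]

theorem upperGamma_natCast_add_one (m : ℕ) (x : ℝ) :
    upperGamma (m + 1) x = m ! * (exp (-x) * truncExp (m + 1) x) := by
  rw [upperGamma, ← integral_Ioi_pow_mul_exp_neg]
  simp [rpow_natCast]

-- For `k = 0` both sides vanish, since `Real.Gamma 0 = 0`.
theorem regUpperGamma_natCast (k : ℕ) (x : ℝ) :
    regUpperGamma k x = exp (-x) * truncExp k x := by
  cases k with
  | zero => simp [regUpperGamma, truncExp]
  | succ m =>
    rw [regUpperGamma, Nat.cast_succ, upperGamma_natCast_add_one, Gamma_nat_eq_factorial]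
    field_simp

theorem truncExp_eq_exp_mul_regUpperGamma (k : ℕ) (x : ℝ) :
    truncExp k x = exp x * regUpperGamma k x := by
  rw [regUpperGamma_natCast, ← mul_assoc, ← exp_add, add_neg_cancel, exp_zero, one_mul]

theorem pow_tsub_mul_pow_div_factorial_add {q : ℝ} (hq : q ≠ 0) (k : ℕ) (x : ℝ) (n : ℕ) :
    q ^ (n + k - k) * (x ^ (n + k) / (n + k)!) = (q ^ k)⁻¹ * ((q * x) ^ (n + k) / (n + k)!) := by
  rw [Nat.add_sub_cancel, mul_pow, pow_add q n k]
  field_simp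

theorem hasSum_pow_tsub_mul_pow_div_factorial {q : ℝ} (hq : q ≠ 0) (k : ℕ) (x : ℝ) :
    HasSum (fun n => q ^ (n - k) * (x ^ n / n !))
      (exp x * regUpperGamma k x
        + q ^ (-(k : ℤ)) * exp (q * x) * (1 - regUpperGamma k (q * x))) := by
  have htail := (summable_nat_add_iff k).mpr (summable_pow_div_factorial (q * x))
  have hsummable : Summable fun n => q ^ (n - k) * (x ^ n / n !) := by
    refine (summable_nat_add_iff k).mp ?_
    simpa only [pow_tsub_mul_pow_div_factorial_add hq] using htail.mul_left (q ^ k)⁻¹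
  have hhead : ∑ n ∈ range k, q ^ (n - k) * (x ^ n / n !) = truncExp k x :=
    sum_congr rfl fun n hn => by
      rw [Nat.sub_eq_zero_of_le (mem_range.mp hn).le, pow_zero, one_mul]
  convert hsummable.hasSum using 1
  rw [← hsummable.sum_add_tsum_nat_add k, hhead,
    tsum_congr (pow_tsub_mul_pow_div_factorial_add hq k x), tsum_mul_left,
    tsum_pow_add_div_factorial, truncExp_eq_exp_mul_regUpperGamma,
    truncExp_eq_exp_mul_regUpperGamma, zpow_neg, zpow_natCast]
  ring

theorem pns_click_prob_general (lam : ℝ) (k : ℕ) (pc pd : ℝ)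
    (hpc : pc ∈ Set.Ico (0:ℝ) 1) :
    ∑' n : ℕ, (1 - (1 - pd) * (1 - pc) ^ (n - k))
        * (Real.exp (-lam) * lam ^ n / n.factorial)
      = 1 - (1 - pd) * (1 - pc) ^ (-(k : ℤ)) * Real.exp (-(pc * lam))
            * (1 - regUpperGamma k ((1 - pc) * lam))
          - (1 - pd) * regUpperGamma k lam := by
  have hq : 1 - pc ≠ 0 := by linarith [hpc.2]
  have hclick := ((hasSum_pow_div_factorial lam).sub
    ((hasSum_pow_tsub_mul_pow_div_factorial hq k lam).mul_left (1 - pd))).mul_left (exp (-lam))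
  have hcancel : exp (-lam) * exp lam = 1 := by rw [← exp_add, neg_add_cancel, exp_zero]
  have hpc_lam : exp (-lam) * exp ((1 - pc) * lam) = exp (-(pc * lam)) := by
    rw [← exp_add]; congr 1; ring
  refine (tsum_congr fun n => ?_).trans (hclick.tsum_eq.trans ?_)
  · ring
  · rw [← hpc_lam]
    linear_combination (1 - (1 - pd) * regUpperGamma k lam) * hcancel

/-- PNS click probability: Alice emits `N ~ Poisson(λ)` photons, Eve removes
`min(N,k)` photons, and Bob's detector has efficiency `p_c` and dark count
probability `p_d`. -/
theorem pns_click_prob (lam : ℝ) (k : ℕ) (pc pd : ℝ) (hlam : 0 < lam) (hk : 1 ≤ k)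
    (hpc : pc ∈ Set.Ico (0:ℝ) 1) (hpd : pd ∈ Set.Ico (0:ℝ) 1) :
    ∑' n : ℕ, (1 - (1 - pd) * (1 - pc) ^ (n - k))
        * (Real.exp (-lam) * lam ^ n / n.factorial)
      = 1 - (1 - pd) * (1 - pc) ^ (-(k : ℤ)) * Real.exp (-(pc * lam))
            * (1 - regUpperGamma k ((1 - pc) * lam))
          - (1 - pd) * regUpperGamma k lam :=
  pns_click_prob_general lam k pc pd hpc
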